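/- arXiv:2405.01214 — 8 statements merged into one kernel-verified Lean document; each statement's English description precedes it below -/
import Mathlib

section
/- Let A be a finite subset of a metric space (M,d) and fix β > 0. For all r, k > 0, the core bifiltration is contained in a rescaled multicover bifiltration: Cr^β_{r,k}(A) ⊆ Cov_{(1+β^{-1})r, k}(A). -/
open Metric ENNReal

/-- The `k`-core distance of `x` to a finite set `A`:
`inf { r ≥ 0 : |B(x,r) ∩ A| ≥ ⌈k⌉ }` (valued in `ℝ≥0∞`). -/
noncomputable def coreDist {M : Type*} [MetricSpace M] (A : Finset M) (k : ℝ) (x : M) : ℝ≥0∞ :=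
  sInf {r : ℝ≥0∞ | ⌈k⌉ ≤ (((A : Set M) ∩ {y | edist x y ≤ r}).ncard : ℤ)}

/-- The core dissimilarity `Λ^β_k(a,x) = max { β·Core^A_k(a), d(a,x) }`. -/
noncomputable def lam {M : Type*} [MetricSpace M] (A : Finset M) (β k : ℝ) (a x : M) : ℝ≥0∞ :=
  max (ENNReal.ofReal β * coreDist A k a) (edist a x)

/-- The multicover bifiltration. -/
def Cov {M : Type*} [MetricSpace M] (A : Finset M) (r k : ℝ) : Set M :=
  {x | ⌈k⌉ ≤ (((A : Set M) ∩ Metric.closedBall x r).ncard : ℤ)}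

/-- The core bifiltration. -/
def Cr {M : Type*} [MetricSpace M] (A : Finset M) (β r k : ℝ) : Set M :=
  ⋃ a ∈ A, {x | lam A β k a x ≤ ENNReal.ofReal r}

theorem stmt6 {M : Type*} [MetricSpace M] (A : Finset M) (β : ℝ) (hβ : 0 < β)
    (r k : ℝ) (hr : 0 < r) (hk : 0 < k) :
    Cr A β r k ⊆ Cov A ((1 + β⁻¹) * r) k := by
  intro x hx
  simp only [Cr, Set.mem_iUnion, Set.mem_setOf_eq] at hx
  obtain ⟨a, haA, hlam⟩ := hx
  rw [lam, max_le_iff] at hlam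
  obtain ⟨h1, h2⟩ := hlam
  set c : ℝ≥0∞ := ENNReal.ofReal (r / β) with hc
  have hβ0 : ENNReal.ofReal β ≠ 0 := (ENNReal.ofReal_pos.mpr hβ).ne'
  have hβt : ENNReal.ofReal β ≠ ⊤ := ofReal_ne_top
  have hcore : coreDist A k a ≤ c := by
    rw [hc, ENNReal.ofReal_div_of_pos hβ,
      ENNReal.le_div_iff_mul_le (Or.inl hβ0) (Or.inl hβt), mul_comm]
    exact h1
  have hct : c ≠ ⊤ := ofReal_ne_top
  have key : ∀ s : ℝ≥0∞, c < s →
      (⌈k⌉ : ℤ) ≤ (((A : Set M) ∩ {y | edist a y ≤ s}).ncard : ℤ) := by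
    intro s hs
    have hlt : coreDist A k a < s := lt_of_le_of_lt hcore hs
    obtain ⟨t, ht, hts⟩ := sInf_lt_iff.mp hlt
    refine le_trans ht ?_
    have hsub : (A : Set M) ∩ {y | edist a y ≤ t} ⊆ (A : Set M) ∩ {y | edist a y ≤ s} :=
      fun y hy => ⟨hy.1, le_trans hy.2 hts.le⟩
    exact_mod_cast Set.ncard_le_ncard hsub (A.finite_toSet.inter_of_left _)
  have hattain : (⌈k⌉ : ℤ) ≤ (((A : Set M) ∩ {y | edist a y ≤ c}).ncard : ℤ) := by
    by_cases hB : (A.filter (fun y => c < edist a y)).Nonempty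
    · obtain ⟨m, hmA, hmin⟩ := (A.filter (fun y => c < edist a y)).exists_min_image
        (fun y => edist a y) hB
      have hmc : c < edist a m := (Finset.mem_filter.mp hmA).2
      obtain ⟨s, hcs, hsm⟩ := exists_between hmc
      have hEq : (A : Set M) ∩ {y | edist a y ≤ s} = (A : Set M) ∩ {y | edist a y ≤ c} := by
        ext y
        constructor
        · rintro ⟨hyA, hy⟩
          refine ⟨hyA, ?_⟩
          by_contra hyc
          have : c < edist a y := lt_of_not_ge hyc
          have := hmin y (Finset.mem_filter.mpr ⟨hyA, this⟩)
          exact absurd (le_trans this hy) (not_le.mpr hsm)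
        · rintro ⟨hyA, hy⟩
          exact ⟨hyA, le_trans hy hcs.le⟩
      have := key s hcs
      rwa [hEq] at this
    · have hall : (A : Set M) ∩ {y | edist a y ≤ c} = (A : Set M) := by
        ext y
        refine ⟨fun h => h.1, fun h => ⟨h, ?_⟩⟩
        by_contra hyc
        exact hB ⟨y, Finset.mem_filter.mpr ⟨h, lt_of_not_ge hyc⟩⟩
      have hcc : c < c + 1 := ENNReal.lt_add_right hct one_ne_zero
      have := key (c + 1) hcc
      refine le_trans this ?_
      rw [hall]
      exact_mod_cast Set.ncard_le_ncard (Set.inter_subset_left) A.finite_toSet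
  simp only [Cov, Set.mem_setOf_eq]
  refine le_trans hattain ?_
  have hsub : (A : Set M) ∩ {y | edist a y ≤ c} ⊆
      (A : Set M) ∩ Metric.closedBall x ((1 + β⁻¹) * r) := by
    rintro y ⟨hyA, hy⟩
    refine ⟨hyA, ?_⟩
    rw [Metric.mem_closedBall]
    have hax : dist a x ≤ r := by rwa [← edist_le_ofReal hr.le]
    have hay : dist a y ≤ r / β := by
      rw [hc] at hy
      rwa [← edist_le_ofReal (by positivity)]
    have htri : dist y x ≤ dist y a + dist a x := dist_triangle _ _ _
    rw [dist_comm y a] at htri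
    have : dist y x ≤ r / β + r := by linarith
    refine le_trans this (le_of_eq ?_)
    field_simp
    ring
  exact_mod_cast Set.ncard_le_ncard hsub (A.finite_toSet.inter_of_left _)
end

section
/- Let A be a finite subset of a metric space (M,d) and fix β > 0. For all r, k > 0, the multicover bifiltration is contained in a rescaled core bifiltration: Cov_{r,k}(A) ⊆ Cr^β_{max{1, 2β}·r, k}(A). -/
open Metric ENNReal

theorem stmt7 {M : Type*} [MetricSpace M] (A : Finset M) (β : ℝ) (hβ : 0 < β)
    (r k : ℝ) (hr : 0 < r) (hk : 0 < k) :
    Cov A r k ⊆ Cr A β (max 1 (2 * β) * r) k := by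

  intro x hx
  have hk1 : (1:ℤ) ≤ ⌈k⌉ := by
    have := Int.ceil_pos.mpr hk; omega
  have hne : ((A : Set M) ∩ Metric.closedBall x r).Nonempty := by
    rw [Set.nonempty_iff_ne_empty]
    intro h
    rw [Cov, Set.mem_setOf_eq, h, Set.ncard_empty] at hx
    omega
  obtain ⟨a, haA, hax⟩ := hne
  have hax' : dist a x ≤ r := mem_closedBall.mp hax
  have hfin : ((A : Set M) ∩ {y | edist a y ≤ ENNReal.ofReal (2*r)}).Finite :=
    A.finite_toSet.inter_of_left _
  have hsub : (A : Set M) ∩ Metric.closedBall x r ⊆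
      (A : Set M) ∩ {y | edist a y ≤ ENNReal.ofReal (2*r)} := by
    rintro y ⟨hyA, hy⟩
    refine ⟨hyA, ?_⟩
    calc edist a y ≤ edist a x + edist x y := edist_triangle _ _ _
      _ ≤ ENNReal.ofReal r + ENNReal.ofReal r := by
          apply add_le_add
          · rw [edist_dist]; exact ENNReal.ofReal_le_ofReal hax'
          · rw [edist_dist]; exact ENNReal.ofReal_le_ofReal (mem_closedBall'.mp hy)
      _ = ENNReal.ofReal (2*r) := by rw [← ENNReal.ofReal_add hr.le hr.le]; ring_nf
  have hcore : coreDist A k a ≤ ENNReal.ofReal (2*r) := by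
    apply sInf_le
    simp only [Set.mem_setOf_eq]
    exact le_trans hx (by exact_mod_cast Set.ncard_le_ncard hsub hfin)
  refine Set.mem_iUnion₂.mpr ⟨a, haA, ?_⟩
  simp only [Set.mem_setOf_eq, lam, max_le_iff]
  constructor
  · calc ENNReal.ofReal β * coreDist A k a ≤ ENNReal.ofReal β * ENNReal.ofReal (2*r) :=
        mul_le_mul_right hcore _
      _ = ENNReal.ofReal (β * (2*r)) := (ENNReal.ofReal_mul hβ.le).symm
      _ ≤ ENNReal.ofReal (max 1 (2*β) * r) :=
        ENNReal.ofReal_le_ofReal (by nlinarith [le_max_right 1 (2*β)])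
  · rw [edist_dist]
    apply ENNReal.ofReal_le_ofReal
    calc dist a x ≤ r := hax'
      _ ≤ max 1 (2*β) * r := by nlinarith [le_max_left 1 (2*β)]
end

section
/- Let A be a finite subset of Euclidean space ℝⁿ and fix β > 0. For all r, k > 0 the Delaunay core bifiltration and the core bifiltration satisfy ACr^β_{r,k}(A) ⊆ Cr^β_{r,k}(A) ⊆ ACr^β_{(2β+1)r, k}(A). -/
open Metric ENNReal

/-- Voronoi cell of `a ∈ A`. -/
def Vor {n : ℕ} (A : Finset (EuclideanSpace ℝ (Fin n))) (a : EuclideanSpace ℝ (Fin n)) :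
    Set (EuclideanSpace ℝ (Fin n)) :=
  {x | ∀ a' ∈ A, dist a x ≤ dist a' x}

/-- The Delaunay core bifiltration. -/
def ACr {n : ℕ} (A : Finset (EuclideanSpace ℝ (Fin n))) (β r k : ℝ) :
    Set (EuclideanSpace ℝ (Fin n)) :=
  ⋃ a ∈ A, ({x | lam A β k a x ≤ ENNReal.ofReal r} ∩ Vor A a)

/-!
If `x` lies in the core ball around `a ∈ A`, let `b` be a point of `A` nearest to `x`, so that
`x ∈ Vor A b`. The core distance is `1`-Lipschitz and `d(a, b) ≤ d(a, x) + d(b, x) ≤ 2 d(a, x)`,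
so passing from `a` to `b` multiplies the core dissimilarity by at most `2β + 1`.
-/

section

variable {M : Type*} [MetricSpace M] (A : Finset M) (β k : ℝ)

theorem coreDist_le_coreDist_add_edist (a b : M) :
    coreDist A k b ≤ coreDist A k a + edist a b := by
  unfold coreDist
  rw [ENNReal.sInf_add]
  refine le_iInf₂ fun s hs => sInf_le ?_
  have hsub : (A : Set M) ∩ {y | edist a y ≤ s} ⊆
      (A : Set M) ∩ {y | edist b y ≤ s + edist a b} :=
    fun y ⟨hyA, hy⟩ => ⟨hyA, calc
      edist b y ≤ edist a b + edist a y := by rw [edist_comm a b]; exact edist_triangle _ _ _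
      _ ≤ s + edist a b := by rw [add_comm]; gcongr; exact hy⟩
  have hcard := Set.ncard_le_ncard hsub (A.finite_toSet.inter_of_left _)
  exact le_trans (α := ℤ) hs (Nat.cast_le.mpr hcard)

theorem lam_le_of_edist_le {a b x : M} (hbx : edist b x ≤ edist a x) :
    lam A β k b x ≤ (2 * ENNReal.ofReal β + 1) * lam A β k a x := by
  set c := ENNReal.ofReal β
  have hax : edist a x ≤ lam A β k a x := le_max_right _ _
  have hcore : c * coreDist A k a ≤ lam A β k a x := le_max_left _ _
  have hab : edist a b ≤ 2 * lam A β k a x := calc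
    edist a b ≤ edist a x + edist b x := by rw [edist_comm b x]; exact edist_triangle _ _ _
    _ ≤ 2 * lam A β k a x := by rw [two_mul]; gcongr; exact hbx.trans hax
  refine max_le ?_ ?_
  · calc c * coreDist A k b ≤ c * coreDist A k a + c * edist a b := by
          rw [← mul_add]; gcongr; exact coreDist_le_coreDist_add_edist A k a b
      _ ≤ lam A β k a x + c * (2 * lam A β k a x) := by gcongr
      _ = (2 * c + 1) * lam A β k a x := by ring
  · exact (hbx.trans hax).trans (le_mul_of_one_le_left' le_add_self)

end

theorem ACr_subset_Cr {n : ℕ} (A : Finset (EuclideanSpace ℝ (Fin n))) (β r k : ℝ) :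
    ACr A β r k ⊆ Cr A β r k := by
  unfold ACr Cr
  exact Set.biUnion_mono subset_rfl fun _ _ => Set.inter_subset_left

theorem exists_mem_Vor {n : ℕ} {A : Finset (EuclideanSpace ℝ (Fin n))} (hA : A.Nonempty)
    (x : EuclideanSpace ℝ (Fin n)) : ∃ b ∈ A, x ∈ Vor A b :=
  A.exists_min_image (fun a' => dist a' x) hA

theorem Cr_subset_ACr {n : ℕ} (A : Finset (EuclideanSpace ℝ (Fin n))) {β : ℝ} (hβ : 0 ≤ β)
    (r k : ℝ) : Cr A β r k ⊆ ACr A β ((2 * β + 1) * r) k := by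
  intro x hx
  simp only [Cr, ACr, Set.mem_iUnion] at hx ⊢
  obtain ⟨a, ha, hlam⟩ := hx
  obtain ⟨b, hb, hVor⟩ := exists_mem_Vor ⟨a, ha⟩ x
  have hbx : edist b x ≤ edist a x := by
    simpa only [edist_dist] using ENNReal.ofReal_le_ofReal (hVor a ha)
  refine ⟨b, hb, ?_, hVor⟩
  calc lam A β k b x ≤ (2 * ENNReal.ofReal β + 1) * lam A β k a x := lam_le_of_edist_le A β k hbx
    _ ≤ (2 * ENNReal.ofReal β + 1) * ENNReal.ofReal r := by gcongr; exact hlam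
    _ = ENNReal.ofReal ((2 * β + 1) * r) := by
      rw [ENNReal.ofReal_mul (by positivity), ENNReal.ofReal_add (by positivity) zero_le_one,
        ENNReal.ofReal_mul zero_le_two, ENNReal.ofReal_one, ENNReal.ofReal_ofNat]

theorem stmt8_general {n : ℕ} (A : Finset (EuclideanSpace ℝ (Fin n))) (β : ℝ) (hβ : 0 < β)
    (r k : ℝ) :
    ACr A β r k ⊆ Cr A β r k ∧ Cr A β r k ⊆ ACr A β ((2 * β + 1) * r) k :=
  ⟨ACr_subset_Cr A β r k, Cr_subset_ACr A hβ.le r k⟩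

theorem stmt8 {n : ℕ} (A : Finset (EuclideanSpace ℝ (Fin n))) (β : ℝ) (hβ : 0 < β)
    (r k : ℝ) (hr : 0 < r) (hk : 0 < k) :
    ACr A β r k ⊆ Cr A β r k ∧ Cr A β r k ⊆ ACr A β ((2 * β + 1) * r) k :=
  stmt8_general A β hβ r k
end

section
/- Let A be a finite subset of ℝⁿ. For all r, k > 0, the multicover set Cov_{r,k}(A) equals the union over a ∈ A of the Γ_k-Voronoi balls B_{Γ_k}(a,r) ∩ Vor_A(a). -/
open Metric ENNReal

variable {M : Type*} [MetricSpace M]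

lemma setEq (A : Finset M) (x : M) (c : ℝ≥0∞) :
    (A : Set M) ∩ {y | edist x y ≤ c} = ↑(A.filter (fun y => edist x y ≤ c)) := by
  ext y; simp only [Finset.coe_filter, Set.mem_inter_iff, Set.mem_setOf_eq, Finset.mem_coe]

lemma coreDist_le_iff (A : Finset M) (k : ℝ) (x : M) (c : ℝ≥0∞) (hc : c ≠ ⊤) :
    coreDist A k x ≤ c ↔ ⌈k⌉ ≤ (((A : Set M) ∩ {y | edist x y ≤ c}).ncard : ℤ) := by
  constructor
  · intro h
    set S := {r : ℝ≥0∞ | ⌈k⌉ ≤ (((A : Set M) ∩ {y | edist x y ≤ r}).ncard : ℤ)} with hS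
    have hne : S.Nonempty := by
      by_contra hemp
      rw [Set.not_nonempty_iff_eq_empty] at hemp
      have : coreDist A k x = ⊤ := by rw [coreDist, ← hS, hemp, sInf_empty]
      rw [this] at h
      exact hc (top_le_iff.mp h)
    -- minimizer of card
    set T := fun c : ℝ≥0∞ => A.filter (fun y => edist x y ≤ c) with hT
    have hcard : ∀ c ∈ S, (((A : Set M) ∩ {y | edist x y ≤ c}).ncard : ℤ) = ((T c).card : ℤ) := by
      intro c _; rw [setEq, Set.ncard_coe_finset]
    set N := sInf {m : ℕ | ∃ c ∈ S, (T c).card = m} with hN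
    have hNne : {m : ℕ | ∃ c ∈ S, (T c).card = m}.Nonempty := by
      obtain ⟨c, hcS⟩ := hne; exact ⟨(T c).card, c, hcS, rfl⟩
    obtain ⟨c₀, hc₀S, hc₀⟩ := Nat.sInf_mem hNne
    have hmin : ∀ c' ∈ S, (T c₀).card ≤ (T c').card := by
      intro c' hc'; rw [hc₀]; exact Nat.sInf_le ⟨c', hc', rfl⟩
    -- T c₀ ⊆ T c' for all c' ∈ S
    have hsub : ∀ c' ∈ S, T c₀ ⊆ T c' := by
      intro c' hc'
      rcases le_total c' c₀ with hle | hle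
      · have h1 : T c' ⊆ T c₀ := by
          intro y hy; simp only [hT, Finset.mem_filter] at *
          exact ⟨hy.1, hy.2.trans hle⟩
        have := Finset.eq_of_subset_of_card_le h1 (hmin c' hc')
        rw [this]
      · intro y hy; simp only [hT, Finset.mem_filter] at *
        exact ⟨hy.1, hy.2.trans hle⟩
    -- so every y in T c₀ has edist x y ≤ sInf S ≤ c
    have hfinal : T c₀ ⊆ T c := by
      intro y hy
      have hmem : y ∈ A := (Finset.mem_filter.mp hy).1
      have : edist x y ≤ sInf S := by
        apply le_sInf
        intro c' hc'
        exact (Finset.mem_filter.mp (hsub c' hc' hy)).2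
      simp only [hT, Finset.mem_filter]
      exact ⟨hmem, this.trans h⟩
    have hk₀ : ⌈k⌉ ≤ ((T c₀).card : ℤ) := by rw [← hcard c₀ hc₀S]; exact hc₀S
    have hfin : ⌈k⌉ ≤ ((T c).card : ℤ) :=
      hk₀.trans (by exact_mod_cast Finset.card_le_card hfinal)
    show ⌈k⌉ ≤ _
    rw [setEq, Set.ncard_coe_finset]; exact hfin
  · intro h; exact sInf_le h


theorem stmt9 {n : ℕ} (A : Finset (EuclideanSpace ℝ (Fin n))) (r k : ℝ)
    (hr : 0 < r) (hk : 0 < k) :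
    Cov A r k =
      ⋃ a ∈ A, ({x | max (coreDist A k x) (edist a x) ≤ ENNReal.ofReal r} ∩ Vor A a) := by
  have hball : ∀ x : EuclideanSpace ℝ (Fin n),
      (A : Set _) ∩ Metric.closedBall x r = (A : Set _) ∩ {y | edist x y ≤ ENNReal.ofReal r} := by
    intro x; ext y
    simp only [Set.mem_inter_iff, Metric.mem_closedBall, Set.mem_setOf_eq,
      edist_le_ofReal hr.le, dist_comm]
  ext x
  constructor
  · intro hx
    have hx' : ⌈k⌉ ≤ (((A : Set _) ∩ {y | edist x y ≤ ENNReal.ofReal r}).ncard : ℤ) := by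
      rw [← hball]; exact hx
    have hcore : coreDist A k x ≤ ENNReal.ofReal r := sInf_le hx'
    -- the ball contains an element of A
    have hpos : 0 < ((A : Set _) ∩ Metric.closedBall x r).ncard := by
      have h0 : (0 : ℤ) < ⌈k⌉ := Int.ceil_pos.mpr hk
      exact_mod_cast lt_of_lt_of_le h0 hx
    obtain ⟨y, hyA, hyb⟩ := Set.nonempty_of_ncard_ne_zero hpos.ne'
    have hAne : A.Nonempty := ⟨y, hyA⟩
    obtain ⟨a, haA, hamin⟩ := A.exists_min_image (fun a => dist a x) hAne
    refine Set.mem_iUnion₂.mpr ⟨a, haA, ?_, ?_⟩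
    · simp only [Set.mem_setOf_eq, max_le_iff]
      refine ⟨hcore, ?_⟩
      have h1 : dist a x ≤ r := (hamin y hyA).trans (by simpa [dist_comm] using hyb)
      rw [edist_dist]
      exact ofReal_le_ofReal h1
    · exact hamin
  · intro hx
    obtain ⟨a, haA, hmem⟩ := Set.mem_iUnion₂.mp hx
    obtain ⟨hmem, -⟩ := hmem
    have hcore : coreDist A k x ≤ ENNReal.ofReal r := le_trans (le_max_left _ _) hmem
    have := (coreDist_le_iff A k x (ENNReal.ofReal r) ofReal_ne_top).mp hcore
    show ⌈k⌉ ≤ _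
    rw [hball]; exact this
end

section
/- Let A be a finite subset of ℝⁿ and fix β > 0. For all r, k > 0, the Delaunay core bifiltration is contained in the rescaled multicover bifiltration: ACr^β_{r,k}(A) ⊆ Cov_{(1+β^{-1})r, k}(A). -/
open Metric ENNReal

lemma count_mono {M : Type*} [MetricSpace M] (A : Finset M) (a : M) {u t : ℝ≥0∞} (h : u ≤ t) :
    ((A : Set M) ∩ {y | edist a y ≤ u}).ncard ≤ ((A : Set M) ∩ {y | edist a y ≤ t}).ncard := by
  apply Set.ncard_le_ncard
  · exact Set.inter_subset_inter_right _ (fun y hy => le_trans hy h)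
  · exact (A.finite_toSet).inter_of_left _

lemma coreDist_mem {M : Type*} [MetricSpace M] (A : Finset M) (k : ℝ) (a : M) {t : ℝ≥0∞}
    (ht : t ≠ ⊤) (h : coreDist A k a ≤ t) :
    ⌈k⌉ ≤ (((A : Set M) ∩ {y | edist a y ≤ t}).ncard : ℤ) := by
  classical
  set S : Set ℝ≥0∞ := {r | ⌈k⌉ ≤ (((A : Set M) ∩ {y | edist a y ≤ r}).ncard : ℤ)} with hS
  have hsinf : sInf S ≤ t := h
  set s := sInf S with hs
  have hst : s ≠ ⊤ := fun hh => ht (top_le_iff.mp (hh ▸ hsinf))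
  obtain ⟨u, hu, hufs⟩ : ∃ u, s < u ∧ ∀ y ∈ A, edist a y ≤ u → edist a y ≤ s := by
    by_cases hG : (A.filter (fun y => s < edist a y)).Nonempty
    · set d := (A.filter (fun y => s < edist a y)).inf' hG (edist a) with hd
      have hsd : s < d := by
        rw [hd, Finset.lt_inf'_iff]
        intro y hy
        exact (Finset.mem_filter.mp hy).2
      obtain ⟨u, h1, h2⟩ := exists_between hsd
      refine ⟨u, h1, fun y hy hyu => ?_⟩
      by_contra hc
      push_neg at hc
      have : d ≤ edist a y := Finset.inf'_le _ (Finset.mem_filter.mpr ⟨hy, hc⟩)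
      exact absurd (hyu.trans_lt h2) (not_lt.mpr this)
    · refine ⟨s + 1, ENNReal.lt_add_right hst one_ne_zero, fun y hy _ => ?_⟩
      by_contra hc
      push_neg at hc
      exact hG ⟨y, Finset.mem_filter.mpr ⟨hy, hc⟩⟩
  obtain ⟨v, hvS, hvu⟩ := sInf_lt_iff.mp hu
  have hvS' : ⌈k⌉ ≤ (((A : Set M) ∩ {y | edist a y ≤ v}).ncard : ℤ) := hvS
  have hsub : ((A : Set M) ∩ {y | edist a y ≤ v}) ⊆ ((A : Set M) ∩ {y | edist a y ≤ s}) := by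
    rintro y ⟨hyA, hyv⟩
    exact ⟨hyA, hufs y hyA (hyv.trans hvu.le)⟩
  have h1 : ((A : Set M) ∩ {y | edist a y ≤ v}).ncard ≤ ((A : Set M) ∩ {y | edist a y ≤ s}).ncard :=
    Set.ncard_le_ncard hsub ((A.finite_toSet).inter_of_left _)
  have h2 := count_mono A a hsinf
  exact hvS'.trans (by exact_mod_cast h1.trans h2)

theorem stmt10 {n : ℕ} (A : Finset (EuclideanSpace ℝ (Fin n))) (β : ℝ) (hβ : 0 < β)
    (r k : ℝ) (hr : 0 < r) (hk : 0 < k) :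
    ACr A β r k ⊆ Cov A ((1 + β⁻¹) * r) k := by
  intro x hx
  simp only [ACr, Set.mem_iUnion] at hx
  obtain ⟨a, ha, hlam, hvor⟩ := hx
  simp only [lam, max_le_iff] at hlam
  obtain ⟨h1, h2⟩ := hlam
  have hβ0 : ENNReal.ofReal β ≠ 0 := by
    simp [ENNReal.ofReal_eq_zero, not_le, hβ]
  have hβt : ENNReal.ofReal β ≠ ⊤ := ENNReal.ofReal_ne_top
  set s0 : ℝ≥0∞ := ENNReal.ofReal r / ENNReal.ofReal β with hs0
  have hcore : coreDist A k a ≤ s0 :=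
    (ENNReal.le_div_iff_mul_le (Or.inl hβ0) (Or.inl hβt)).mpr (by rwa [mul_comm])
  have hs0t : s0 ≠ ⊤ := (ENNReal.div_lt_top ENNReal.ofReal_ne_top hβ0).ne
  have hs0eq : s0 = ENNReal.ofReal (r / β) := by
    rw [hs0, ENNReal.ofReal_div_of_pos hβ]
  have hcount := coreDist_mem A k a hs0t hcore
  refine le_trans hcount ?_
  have hsub : ((A : Set _) ∩ {y | edist a y ≤ s0}) ⊆
      ((A : Set _) ∩ Metric.closedBall x ((1 + β⁻¹) * r)) := by
    rintro y ⟨hyA, hy⟩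
    refine ⟨hyA, ?_⟩
    rw [Metric.mem_closedBall]
    have hay : dist a y ≤ r / β := by
      simp only [hs0eq, Set.mem_setOf_eq, edist_le_ofReal (show (0:ℝ) ≤ r / β by positivity)] at hy
      exact hy
    have hax : dist a x ≤ r := by
      rwa [edist_le_ofReal hr.le] at h2
    calc dist y x ≤ dist y a + dist a x := dist_triangle _ _ _
      _ ≤ r / β + r := by rw [dist_comm]; exact add_le_add hay hax
      _ = (1 + β⁻¹) * r := by field_simp; ring
  exact_mod_cast Set.ncard_le_ncard hsub ((A.finite_toSet).inter_of_left _)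
end

section
/- Let A be a finite subset of ℝⁿ and fix β > 0. For all r, k > 0, the multicover bifiltration is contained in the rescaled Delaunay core bifiltration: Cov_{r,k}(A) ⊆ ACr^β_{max{1,2β}·r, k}(A). -/
open Metric ENNReal

theorem stmt11 {n : ℕ} (A : Finset (EuclideanSpace ℝ (Fin n))) (β : ℝ) (hβ : 0 < β)
    (r k : ℝ) (hr : 0 < r) (hk : 0 < k) :
    Cov A r k ⊆ ACr A β (max 1 (2 * β) * r) k := by
  intro x hx
  have hx' : (⌈k⌉ : ℤ) ≤ (((A : Set _) ∩ Metric.closedBall x r).ncard : ℤ) := hx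
  have hk1 : (1 : ℤ) ≤ ⌈k⌉ := by exact_mod_cast Int.le_ceil_iff.mpr (by simpa using hk)
  have hne : (((A : Set _) ∩ Metric.closedBall x r)).Nonempty := by
    rw [Set.nonempty_iff_ne_empty]
    intro h
    rw [h] at hx'
    simp at hx'
    omega
  obtain ⟨b, hbA, hbx⟩ := hne
  have hAne : A.Nonempty := ⟨b, hbA⟩
  obtain ⟨a, haA, ha⟩ := A.exists_min_image (fun a => dist a x) hAne
  have hax : dist a x ≤ r := le_trans (ha b hbA) hbx
  have hR : max 1 (2 * β) * r = max 1 (2 * β) * r := rfl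
  refine Set.mem_iUnion.mpr ⟨a, Set.mem_iUnion.mpr ⟨haA, ?_, fun a' ha' => ha a' ha'⟩⟩
  -- show lam ≤ ofReal R
  have hR1 : r ≤ max 1 (2 * β) * r := by nlinarith [le_max_left 1 (2*β)]
  have hsub : ((A : Set _) ∩ Metric.closedBall x r) ⊆
      ((A : Set _) ∩ {y | edist a y ≤ ENNReal.ofReal (2 * r)}) := by
    rintro y ⟨hyA, hyx⟩
    refine ⟨hyA, ?_⟩
    have : dist a y ≤ 2 * r := by
      have := dist_triangle a x y
      have hxy : dist x y ≤ r := by rwa [dist_comm]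
      linarith
    simpa [edist_dist] using ENNReal.ofReal_le_ofReal this
  have hcore : coreDist A k a ≤ ENNReal.ofReal (2 * r) := by
    apply sInf_le
    show (⌈k⌉ : ℤ) ≤ _
    have h2 := Set.ncard_le_ncard hsub
      ((A.finite_toSet).subset (Set.inter_subset_left))
    exact hx'.trans (by exact_mod_cast h2)
  show lam A β k a x ≤ _
  rw [lam]
  refine max_le ?_ ?_
  · calc ENNReal.ofReal β * coreDist A k a
        ≤ ENNReal.ofReal β * ENNReal.ofReal (2 * r) := by gcongr
      _ = ENNReal.ofReal (β * (2 * r)) := (ENNReal.ofReal_mul hβ.le).symm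
      _ ≤ ENNReal.ofReal (max 1 (2 * β) * r) := by
        apply ENNReal.ofReal_le_ofReal
        nlinarith [le_max_right 1 (2*β)]
  · rw [edist_dist]
    exact ENNReal.ofReal_le_ofReal (le_trans hax hR1)
end

section
/- Let A, B be finite subsets of a metric space (M,d) and let δ > 0 be such that for every closed set S ⊆ M, |S ∩ A| ≤ |S^δ ∩ B| + δ (where S^δ denotes the closed δ-thickening of S). Then for all r > 0 and all k > δ, Cov_{r,k}(A) ⊆ Cov_{r+δ, k−δ}(B). -/
open Metric ENNReal

/-- The closed `δ`-thickening of a set `S`. -/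
def thick {M : Type*} [MetricSpace M] (S : Set M) (δ : ℝ) : Set M :=
  {x | ∃ s ∈ S, dist s x ≤ δ}

theorem stmt12 {M : Type*} [MetricSpace M] (A B : Finset M) (δ : ℝ) (hδ : 0 < δ)
    (hstab : ∀ S : Set M, IsClosed S →
      (((S ∩ (A : Set M)).ncard : ℝ)) ≤ ((thick S δ ∩ (B : Set M)).ncard : ℝ) + δ)
    (r k : ℝ) (hr : 0 < r) (hk : δ < k) :
    Cov A r k ⊆ Cov B (r + δ) (k - δ) := by
  intro x hx
  have h1 := hstab (Metric.closedBall x r) Metric.isClosed_closedBall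
  have hsub : thick (Metric.closedBall x r) δ ∩ (B : Set M) ⊆
      (B : Set M) ∩ Metric.closedBall x (r + δ) := by
    rintro y ⟨⟨s, hs, hd⟩, hyB⟩
    refine ⟨hyB, ?_⟩
    simp only [Metric.mem_closedBall] at hs ⊢
    calc dist y x ≤ dist y s + dist s x := dist_triangle y s x
    _ ≤ δ + r := add_le_add (by rwa [dist_comm]) hs
    _ = r + δ := add_comm _ _
  have hfin : ((B : Set M) ∩ Metric.closedBall x (r + δ)).Finite :=
    B.finite_toSet.inter_of_left _
  have h2 : ((thick (Metric.closedBall x r) δ ∩ (B : Set M)).ncard : ℝ) ≤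
      (((B : Set M) ∩ Metric.closedBall x (r + δ)).ncard : ℝ) := by
    exact_mod_cast Set.ncard_le_ncard hsub hfin
  have hxA : (⌈k⌉ : ℝ) ≤ (((A : Set M) ∩ Metric.closedBall x r).ncard : ℝ) := by
    exact_mod_cast hx
  have h3 : k - δ ≤ (((B : Set M) ∩ Metric.closedBall x (r + δ)).ncard : ℝ) := by
    have hk' : k ≤ (⌈k⌉ : ℝ) := Int.le_ceil k
    rw [Set.inter_comm] at h1
    linarith
  show (⌈k - δ⌉ : ℤ) ≤ _
  exact_mod_cast Int.ceil_le.mpr h3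
end

section
/- Let A be a finite subset of a metric space (M,d) and fix r and k > 0 with ⌈k⌉ ≤ |A|. A finite subset σ ⊆ A is a simplex of the core Čech complex at parameters (r,k) with β = 1/2 if and only if: (1) there exists x ∈ M with d(a,x) ≤ r for all a ∈ σ, and (2) every a ∈ σ has at least ⌈k⌉ points of A (including itself) within distance 2r. That is, the core Čech bifiltration at β = 1/2 coincides with the degree-Čech bifiltration. -/
open Metric ENNReal

lemma core_le_iff {M : Type*} [MetricSpace M] (A : Finset M) (k : ℝ) (a : M)
    (hcard : ⌈k⌉ ≤ (A.card : ℤ)) (t : ℝ≥0∞) :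
    coreDist A k a ≤ t ↔ ⌈k⌉ ≤ (((A : Set M) ∩ {y | edist a y ≤ t}).ncard : ℤ) := by
  constructor
  · intro h
    by_cases hall : ∀ y ∈ A, edist a y ≤ t
    · have hEq : (A : Set M) ∩ {y | edist a y ≤ t} = (A : Set M) := by
        ext y
        simp only [Set.mem_inter_iff, Set.mem_setOf_eq, Finset.mem_coe, and_iff_left_iff_imp]
        exact fun hy => hall y hy
      rw [hEq, Set.ncard_coe_finset]; exact hcard
    · push_neg at hall
      set F := A.filter (fun y => t < edist a y) with hF
      have hFne : F.Nonempty := by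
        obtain ⟨y, hy, hgt⟩ := hall
        exact ⟨y, by simp [hF, hy, hgt]⟩
      set t0 := F.inf' hFne (fun y => edist a y) with ht0def
      have ht0 : t < t0 := by
        rw [ht0def, Finset.lt_inf'_iff]
        intro y hy; exact (Finset.mem_filter.mp hy).2
      obtain ⟨t', ht1, ht2⟩ := exists_between ht0
      have hlt : coreDist A k a < t' := lt_of_le_of_lt h ht1
      obtain ⟨ρ, hρS, hρlt⟩ := sInf_lt_iff.mp hlt
      have hsub1 : (A : Set M) ∩ {y | edist a y ≤ ρ} ⊆ (A : Set M) ∩ {y | edist a y ≤ t} := by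
        rintro y ⟨hyA, hyd⟩
        refine ⟨hyA, ?_⟩
        by_contra hcon
        have hyF : y ∈ F := by
          simp only [hF, Finset.mem_filter]
          exact ⟨hyA, lt_of_not_ge hcon⟩
        have : t0 ≤ edist a y := Finset.inf'_le _ hyF
        have : t0 ≤ ρ := le_trans this hyd
        exact absurd (lt_of_le_of_lt this hρlt) (not_lt.mpr ht2.le)
      have hfin : ((A : Set M) ∩ {y | edist a y ≤ t}).Finite :=
        A.finite_toSet.subset Set.inter_subset_left
      have := Set.ncard_le_ncard hsub1 hfin
      calc (⌈k⌉ : ℤ) ≤ _ := hρS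
        _ ≤ _ := by exact_mod_cast this
  · intro h
    exact sInf_le h

lemma half_mul_le_iff (c : ℝ≥0∞) (r : ℝ) (hr : 0 ≤ r) :
    ENNReal.ofReal (1 / 2) * c ≤ ENNReal.ofReal r ↔ c ≤ ENNReal.ofReal (2 * r) := by
  have h2 : (ENNReal.ofReal 2) * ENNReal.ofReal (1 / 2) = 1 := by
    rw [← ENNReal.ofReal_mul (by norm_num)]; norm_num
  constructor
  · intro h
    have := mul_le_mul_right h (ENNReal.ofReal 2)
    rwa [← mul_assoc, h2, one_mul, ← ENNReal.ofReal_mul (by norm_num)] at this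
  · intro h
    have := mul_le_mul_right h (ENNReal.ofReal (1 / 2))
    calc ENNReal.ofReal (1 / 2) * c ≤ ENNReal.ofReal (1 / 2) * ENNReal.ofReal (2 * r) := this
      _ = ENNReal.ofReal r := by
          rw [← ENNReal.ofReal_mul (by norm_num)]; ring_nf

lemma coreBall_eq {M : Type*} [MetricSpace M] (a : M) (s : ℝ) (hs : 0 ≤ s) :
    {y : M | edist a y ≤ ENNReal.ofReal s} = Metric.closedBall a s := by
  ext y
  simp only [Set.mem_setOf_eq, Metric.mem_closedBall, edist_dist,
    ENNReal.ofReal_le_ofReal_iff hs, dist_comm]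

theorem stmt15 {M : Type*} [MetricSpace M] (A σ : Finset M) (hσ : σ ⊆ A)
    (r k : ℝ) (hr : 0 < r) (hk : 0 < k) (hcard : ⌈k⌉ ≤ (A.card : ℤ)) :
    (∃ x : M, ∀ a ∈ σ, lam A (1 / 2) k a x ≤ ENNReal.ofReal r) ↔
      ((∃ x : M, ∀ a ∈ σ, dist a x ≤ r) ∧
        ∀ a ∈ σ, ⌈k⌉ ≤ (((A : Set M) ∩ Metric.closedBall a (2 * r)).ncard : ℤ)) := by
  have key : ∀ (a x : M), lam A (1 / 2) k a x ≤ ENNReal.ofReal r ↔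
      (dist a x ≤ r ∧ ⌈k⌉ ≤ (((A : Set M) ∩ Metric.closedBall a (2 * r)).ncard : ℤ)) := by
    intro a x
    rw [lam, max_le_iff, half_mul_le_iff _ r hr.le,
      core_le_iff A k a hcard, coreBall_eq a (2 * r) (by linarith),
      edist_dist, ENNReal.ofReal_le_ofReal_iff hr.le]
    tauto
  constructor
  · rintro ⟨x, hx⟩
    exact ⟨⟨x, fun a ha => ((key a x).mp (hx a ha)).1⟩,
      fun a ha => ((key a x).mp (hx a ha) |>.2)⟩
  · rintro ⟨⟨x, hx⟩, hdeg⟩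
    exact ⟨x, fun a ha => (key a x).mpr ⟨hx a ha, hdeg a ha⟩⟩
end
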